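/- arXiv:2502.19069 — 2 statements merged into one kernel-verified Lean document; each statement's English description precedes it below -/
import Mathlib

section
/- For every natural number n and every real x, the n-th derivative of the function t ↦ Σ_{m=0}^{∞} t^m/(n+1+m)! at x equals Σ_{k=0}^{∞} ((n+k)!/(k!·(2n+1+k)!))·x^k. -/
/-! A power series `∑ aₘ zᵐ` converging absolutely everywhere may be differentiated termwise,
and its derived series again converges absolutely everywhere; iterating, its `j`-th derivative is
`∑ (m + j)⋯(m + 1) a_{m+j} zᵐ`. Here `aₘ = 1/(n+1+m)! ≤ 1/m!`, and
`(m + n)⋯(m + 1) / (2n+1+m)! = (n+m)! / (m! (2n+1+m)!)`. -/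

open scoped Nat

section PowerSeries

variable {𝕜 : Type*} [RCLike 𝕜] {a : ℕ → 𝕜}

-- `m + 1 ≤ 2 ^ m` lets `(2 * |r| + 2) ^ (m + 1)` absorb the factor `m + 1`.
theorem summable_succ_mul_norm_mul_pow (ha : ∀ r : ℝ, Summable fun m => ‖a m‖ * r ^ m)
    (r : ℝ) : Summable fun m => (m + 1) * ‖a (m + 1)‖ * r ^ m := by
  refine .of_norm_bounded ((summable_nat_add_iff 1).2 (ha (2 * |r| + 2))) fun m => ?_
  have hm : (m : ℝ) + 1 ≤ 2 ^ m := by exact_mod_cast Nat.lt_two_pow_self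
  calc ‖(m + 1) * ‖a (m + 1)‖ * r ^ m‖ = ‖a (m + 1)‖ * ((m + 1) * |r| ^ m) := by
        simp only [norm_mul, norm_pow, Real.norm_eq_abs, abs_norm,
          abs_of_nonneg (by positivity : (0 : ℝ) ≤ m + 1)]
        ring
    _ ≤ ‖a (m + 1)‖ * (2 * |r| + 2) ^ (m + 1) := by
        gcongr
        calc ((m : ℝ) + 1) * |r| ^ m ≤ 2 ^ m * |r| ^ m := by gcongr
          _ = (2 * |r|) ^ m := (mul_pow _ _ _).symm
          _ ≤ (2 * |r| + 2) ^ m := by gcongr; linarith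
          _ ≤ (2 * |r| + 2) ^ (m + 1) := pow_le_pow_right₀ (by linarith [abs_nonneg r]) m.le_succ

theorem summable_mul_pow (ha : ∀ r : ℝ, Summable fun m => ‖a m‖ * r ^ m) (z : 𝕜) :
    Summable fun m => a m * z ^ m :=
  .of_norm (by simpa only [norm_mul, norm_pow] using ha ‖z‖)

theorem hasDerivAt_tsum_mul_pow (ha : ∀ r : ℝ, Summable fun m => ‖a m‖ * r ^ m) (x : 𝕜) :
    HasDerivAt (fun z => ∑' m, a m * z ^ m) (∑' m, ((m + 1 : ℕ) : 𝕜) * a (m + 1) * x ^ m) x := by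
  set R := ‖x‖ + 1
  have hu : Summable fun m => m * ‖a m‖ * R ^ (m - 1) :=
    (summable_nat_add_iff 1).1 (by simpa using summable_succ_mul_norm_mul_pow ha R)
  have hbound : ∀ m, ∀ y ∈ Metric.ball (0 : 𝕜) R,
      ‖a m * (m * y ^ (m - 1))‖ ≤ m * ‖a m‖ * R ^ (m - 1) := by
    intro m y hy
    rw [mem_ball_zero_iff] at hy
    rw [norm_mul, norm_mul, norm_pow, RCLike.norm_natCast, mul_left_comm, ← mul_assoc]
    gcongr
  have hx : x ∈ Metric.ball (0 : 𝕜) R := mem_ball_zero_iff.2 (lt_add_one _)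
  have hderiv := hasDerivAt_tsum_of_isPreconnected hu Metric.isOpen_ball
    (convex_ball (0 : 𝕜) R).isPreconnected
    (fun m y _ => (hasDerivAt_pow m y).const_mul (a m)) hbound
    (Metric.mem_ball_self (by positivity)) (summable_mul_pow ha 0) hx
  rw [(Summable.of_norm_bounded hu fun m => hbound m x hx).tsum_eq_zero_add] at hderiv
  simp only [Nat.cast_zero, zero_mul, mul_zero, zero_add, Nat.add_sub_cancel] at hderiv
  exact hderiv.congr_deriv (tsum_congr fun m => by ring)

theorem iteratedDeriv_tsum_mul_pow (ha : ∀ r : ℝ, Summable fun m => ‖a m‖ * r ^ m) (j : ℕ) :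
    iteratedDeriv j (fun z => ∑' m, a m * z ^ m) =
      fun z => ∑' m, ((m + j).descFactorial j : 𝕜) * a (m + j) * z ^ m := by
  induction j generalizing a with
  | zero => simp
  | succ j ih =>
    have hderiv : deriv (fun z => ∑' m, a m * z ^ m) =
        fun z => ∑' m, ((m + 1 : ℕ) : 𝕜) * a (m + 1) * z ^ m :=
      funext fun x => (hasDerivAt_tsum_mul_pow ha x).deriv
    have ha' : ∀ r : ℝ, Summable fun m => ‖((m + 1 : ℕ) : 𝕜) * a (m + 1)‖ * r ^ m :=
      fun r => (summable_succ_mul_norm_mul_pow ha r).congr fun m => by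
        rw [norm_mul, RCLike.norm_natCast, Nat.cast_succ]
    rw [iteratedDeriv_succ', hderiv, ih ha']
    refine funext fun z => tsum_congr fun m => ?_
    rw [← add_assoc, Nat.succ_descFactorial_succ]
    push_cast
    ring

end PowerSeries

theorem summable_norm_inv_factorial_add_mul_pow (c : ℕ) (r : ℝ) :
    Summable fun m => ‖((c + m)! : ℝ)⁻¹‖ * r ^ m := by
  refine .of_norm_bounded (Real.summable_pow_div_factorial |r|) fun m => ?_
  rw [norm_mul, norm_norm, norm_inv, Real.norm_natCast, norm_pow, Real.norm_eq_abs,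
    inv_mul_eq_div]
  exact div_le_div_of_nonneg_left (by positivity) (by positivity)
    (by exact_mod_cast Nat.factorial_le (Nat.le_add_left m c))

/-- Hermite, letter of December 3, 1875: the `n`-th derivative of
`t ↦ ∑_m t^m/(n+1+m)!` at `x` is `∑_k ((n+k)!/(k!(2n+1+k)!)) x^k`. -/
theorem iteratedDeriv_tsum_inv_factorial (n : ℕ) (x : ℝ) :
    iteratedDeriv n (fun t : ℝ => ∑' m : ℕ, t ^ m / (Nat.factorial (n + 1 + m) : ℝ)) x =
      ∑' k : ℕ, ((Nat.factorial (n + k) : ℝ) /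
        (Nat.factorial k * Nat.factorial (2 * n + 1 + k))) * x ^ k := by
  simp_rw [div_eq_inv_mul (_ ^ _)]
  rw [iteratedDeriv_tsum_mul_pow (summable_norm_inv_factorial_add_mul_pow (n + 1)) n]
  refine tsum_congr fun k => congrArg (· * x ^ k) ?_
  have hdesc : (k ! : ℝ) * (k + n).descFactorial n = (k + n)! := by
    have := (k + n).factorial_mul_descFactorial (Nat.le_add_left n k)
    rw [Nat.add_sub_cancel] at this
    exact_mod_cast this
  rw [show n + 1 + (k + n) = 2 * n + 1 + k by ring, add_comm n k, ← hdesc]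
  field_simp
end

section
/- Let a ≤ b be real numbers and let φ, φ₁, ψ, ψ₁ : ℝ → ℝ be continuous functions. Then (∫_a^b φ(x)·φ₁(x) dx)·(∫_a^b ψ(x)·ψ₁(x) dx) − (∫_a^b φ(x)·ψ₁(x) dx)·(∫_a^b φ₁(x)·ψ(x) dx) = ∫_a^b ( ∫_x^b (φ(x)·ψ(y) − φ(y)·ψ(x))·(φ₁(x)·ψ₁(y) − φ₁(y)·ψ₁(x)) dy ) dx. -/
/-!
Regard both sides as functions of the lower limit `a`, with `b` fixed. Both vanish at `a = b`.
Expanding the kernel `(φ x ψ y - φ y ψ x)(φ₁ x ψ₁ y - φ₁ y ψ₁ x)` into four products `f x * g y`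
shows that `∫ y in a..b` of it at `x = a` is exactly minus the derivative of the left side, and by
the fundamental theorem of calculus it is also minus the derivative of the right side.
-/

open intervalIntegral

section LowerLimit

variable {E : Type*} [NormedAddCommGroup E] [NormedSpace ℝ E]

theorem Continuous.integral_hasDerivAt_left [CompleteSpace E] {f : ℝ → E} (hf : Continuous f)
    (b t : ℝ) : HasDerivAt (fun u => ∫ x in u..b, f x) (-f t) t :=
  intervalIntegral.integral_hasDerivAt_left (hf.intervalIntegrable _ _) (hf.stronglyMeasurableAtFilter _ _)
    hf.continuousAt

theorem continuous_parametric_intervalIntegral_left {F : ℝ → ℝ → E}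
    (hF : Continuous (Function.uncurry F)) (b : ℝ) :
    Continuous fun x => ∫ y in x..b, F x y :=
  (continuous_parametric_intervalIntegral_of_continuous (a₀ := b) hF continuous_id).neg.congr
    fun x => (integral_symm b x).symm

theorem integral_integral_hasDerivAt_left [CompleteSpace E] {F : ℝ → ℝ → E}
    (hF : Continuous (Function.uncurry F)) (b t : ℝ) :
    HasDerivAt (fun u => ∫ x in u..b, ∫ y in x..b, F x y) (-∫ y in t..b, F t y) t :=
  (continuous_parametric_intervalIntegral_left hF b).integral_hasDerivAt_left b t

end LowerLimit

theorem integral_mul_integral_hasDerivAt_left {f g : ℝ → ℝ} (hf : Continuous f)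
    (hg : Continuous g) (b t : ℝ) :
    HasDerivAt (fun u => (∫ x in u..b, f x) * ∫ x in u..b, g x)
      (-(f t * ∫ x in t..b, g x) - g t * ∫ x in t..b, f x) t :=
  ((hf.integral_hasDerivAt_left b t).mul (hg.integral_hasDerivAt_left b t)).congr_deriv (by ring)

theorem integral_wedge_mul_wedge_right {φ φ₁ ψ ψ₁ : ℝ → ℝ} (hφ : Continuous φ)
    (hφ₁ : Continuous φ₁) (hψ : Continuous ψ) (hψ₁ : Continuous ψ₁) (x a b : ℝ) :
    ∫ y in a..b, (φ x * ψ y - φ y * ψ x) * (φ₁ x * ψ₁ y - φ₁ y * ψ₁ x) =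
      φ x * φ₁ x * (∫ y in a..b, ψ y * ψ₁ y) + ψ x * ψ₁ x * (∫ y in a..b, φ y * φ₁ y) -
        φ x * ψ₁ x * (∫ y in a..b, φ₁ y * ψ y) - φ₁ x * ψ x * (∫ y in a..b, φ y * ψ₁ y) := by
  have hint : ∀ {f : ℝ → ℝ}, Continuous f → IntervalIntegrable f MeasureTheory.volume a b :=
    fun hf => hf.intervalIntegrable a b
  rw [← integral_const_mul, ← integral_const_mul, ← integral_const_mul, ← integral_const_mul,
    ← integral_add (hint (by fun_prop)) (hint (by fun_prop)),
    ← integral_sub (hint (by fun_prop)) (hint (by fun_prop)),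
    ← integral_sub (hint (by fun_prop)) (hint (by fun_prop))]
  congr 1
  ext y
  ring

theorem teixeira_integral_identity_general_general (a b : ℝ)
    (φ φ₁ ψ ψ₁ : ℝ → ℝ)
    (hφ : Continuous φ) (hφ₁ : Continuous φ₁)
    (hψ : Continuous ψ) (hψ₁ : Continuous ψ₁) :
    (∫ x in a..b, φ x * φ₁ x) * (∫ x in a..b, ψ x * ψ₁ x) -
        (∫ x in a..b, φ x * ψ₁ x) * (∫ x in a..b, φ₁ x * ψ x) =
      ∫ x in a..b, ∫ y in x..b,
        (φ x * ψ y - φ y * ψ x) * (φ₁ x * ψ₁ y - φ₁ y * ψ₁ x) := by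
  let L t := (∫ x in t..b, φ x * φ₁ x) * (∫ x in t..b, ψ x * ψ₁ x) -
    (∫ x in t..b, φ x * ψ₁ x) * (∫ x in t..b, φ₁ x * ψ x)
  let R t := ∫ x in t..b, ∫ y in x..b, (φ x * ψ y - φ y * ψ x) * (φ₁ x * ψ₁ y - φ₁ y * ψ₁ x)
  have hderiv : ∀ t, HasDerivAt (fun t => L t - R t) 0 t := fun t =>
    (((integral_mul_integral_hasDerivAt_left (f := fun x => φ x * φ₁ x)
      (g := fun x => ψ x * ψ₁ x) (by fun_prop) (by fun_prop) b t).sub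
      (integral_mul_integral_hasDerivAt_left (f := fun x => φ x * ψ₁ x)
        (g := fun x => φ₁ x * ψ x) (by fun_prop) (by fun_prop) b t)).sub
      (integral_integral_hasDerivAt_left
        (F := fun x y => (φ x * ψ y - φ y * ψ x) * (φ₁ x * ψ₁ y - φ₁ y * ψ₁ x))
        (by fun_prop) b t)).congr_deriv
      (by rw [integral_wedge_mul_wedge_right hφ hφ₁ hψ hψ₁]; ring)
  have hconst := is_const_of_deriv_eq_zero (fun t => (hderiv t).differentiableAt)
    (fun t => (hderiv t).deriv) a b
  simpa [L, R, sub_eq_zero] using hconst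

/-- The "forme un peu plus générale" of Teixeira's integral identity
(Hermite's letter of November 16, 1888). -/
theorem teixeira_integral_identity_general (a b : ℝ) (hab : a ≤ b)
    (φ φ₁ ψ ψ₁ : ℝ → ℝ)
    (hφ : Continuous φ) (hφ₁ : Continuous φ₁)
    (hψ : Continuous ψ) (hψ₁ : Continuous ψ₁) :
    (∫ x in a..b, φ x * φ₁ x) * (∫ x in a..b, ψ x * ψ₁ x) -
        (∫ x in a..b, φ x * ψ₁ x) * (∫ x in a..b, φ₁ x * ψ x) =
      ∫ x in a..b, ∫ y in x..b,
        (φ x * ψ y - φ y * ψ x) * (φ₁ x * ψ₁ y - φ₁ y * ψ₁ x) :=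
  teixeira_integral_identity_general_general a b φ φ₁ ψ ψ₁ hφ hφ₁ hψ hψ₁
end
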